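/- The Grim Reaper cylinder F₀ : ℝ^{m-1} × (-π/2, π/2) → ℂᵐ, F₀ = F_γ + (0,…,0, iπ/2) with F_γ(x₁,…,xₘ) = (x₁,…,x_{m-1}, -log cos(xₘ) - i xₘ), satisfies θ(F₀) - ⟨F₀, J(-eₘ)⟩ = 0, i.e., F₀ is an f-special Lagrangian with phase 0 for f(z) = 2⟨z, -eₘ⟩. -/
import Mathlib


/-- The real Euclidean inner product on `ℂᵐ = ℂ^{m-1} × ℂ`:
`⟨z,w⟩ = Re(∑ zⱼ conj wⱼ)`. -/
noncomputable def realInnerCm (k : ℕ) (z w : (Fin k → ℂ) × ℂ) : ℝ :=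
  (∑ j, z.1 j * (starRingEnd ℂ) (w.1 j)).re + (z.2 * (starRingEnd ℂ) w.2).re

/-- The Grim Reaper cylinder `F₀(x, s) = (x₁,…,x_{m-1}, -log cos s - i(s - π/2))`
(i.e. `F_γ` shifted by `iπ/2` in the last coordinate). -/
noncomputable def grimCylImm (k : ℕ) (x : Fin k → ℝ) (s : ℝ) : (Fin k → ℂ) × ℂ :=
  (fun j => (x j : ℂ),
    -(Real.log (Real.cos s) : ℂ) - Complex.I * ((s : ℂ) - (Real.pi : ℂ) / 2))

lemma arg_tan_sub_I (s : ℝ) (hs : s ∈ Set.Ioo (-(Real.pi / 2)) (Real.pi / 2)) :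
    Complex.arg ((Real.tan s : ℂ) - Complex.I) = s - Real.pi / 2 := by
  obtain ⟨h1, h2⟩ := hs
  have hc : 0 < Real.cos s := Real.cos_pos_of_mem_Ioo ⟨h1, h2⟩
  have key : (Real.tan s : ℂ) - Complex.I
      = (1 / Real.cos s : ℝ) * (Real.cos (s - Real.pi / 2) + Real.sin (s - Real.pi / 2) * Complex.I) := by
    rw [Real.cos_sub_pi_div_two, Real.sin_sub_pi_div_two]
    rw [Real.tan_eq_sin_div_cos]
    have hc' : (Real.cos s : ℂ) ≠ 0 := Complex.ofReal_ne_zero.2 hc.ne'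
    push_cast at hc' ⊢
    field_simp
    ring
  rw [key, Complex.arg_real_mul _ (by positivity),
    Complex.ofReal_cos, Complex.ofReal_sin, Complex.arg_cos_add_sin_mul_I]
  constructor <;> linarith [Real.pi_pos]

lemma inner_eval (k : ℕ) (x : Fin k → ℝ) (s : ℝ) :
    realInnerCm k (grimCylImm k x s) ((0 : Fin k → ℂ), -Complex.I) = s - Real.pi / 2 := by
  simp [realInnerCm, grimCylImm, Complex.ext_iff, mul_comm]

/-- `F₀` is an `f`-special Lagrangian with phase `0` for `f(z) = 2⟨z,-eₘ⟩`:
its Lagrangian angle `θ(F₀)(x,s) = arg(tan s - i)` satisfies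
`θ(F₀) - ⟨F₀, J(-eₘ)⟩ = 0`, where `J(-eₘ) = (0,…,0,-i)`. -/
theorem grimCyl_phase_zero (k : ℕ) :
    ∀ (x : Fin k → ℝ), ∀ s ∈ Set.Ioo (-(Real.pi / 2)) (Real.pi / 2),
      Complex.arg ((Real.tan s : ℂ) - Complex.I)
        - realInnerCm k (grimCylImm k x s) ((0 : Fin k → ℂ), -Complex.I) = 0 := by
  intro x s hs
  rw [arg_tan_sub_I s hs, inner_eval]
  ring
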